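/- arXiv:1810.10047 — 2 statements merged into one kernel-verified Lean document; each statement's English description precedes it below -/
import Mathlib

section
/- If the dihedral group D_{2N} of order 2N admits a 1-rotational 4-factorization of the complete graph on D_{2N} ∪ {∞}, then N ≡ 2 (mod 4). -/
open SimpleGraph

/-- The image of a graph on `G ∪ {∞}` under right multiplication by `g` (with `∞ g = ∞`). -/
def shiftG {G : Type*} [Group G] (F : SimpleGraph (Option G)) (g : G) :
    SimpleGraph (Option G) :=
  F.map (Equiv.optionCongr (Equiv.mulRight g)).toEmbedding

/-- The `G`-stabilizer of a graph on `G ∪ {∞}`. -/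
def stabG {G : Type*} [Group G] (F : SimpleGraph (Option G)) : Set G :=
  {g | shiftG F g = F}

/-- A `k`-factor: a spanning `k`-regular subgraph of the complete graph. -/
def IsKFactor {V : Type*} (k : ℕ) (F : SimpleGraph V) : Prop :=
  ∀ v : V, (F.neighborSet v).ncard = k

/-- A `k`-factorization: a set of `k`-factors whose edges partition the complete graph. -/
def IsKFactorization {V : Type*} (k : ℕ) (𝓕 : Set (SimpleGraph V)) : Prop :=
  (∀ F ∈ 𝓕, IsKFactor k F) ∧
  ∀ u v : V, u ≠ v → ∃! F, F ∈ 𝓕 ∧ F.Adj u v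

/-- A family of graphs on `G ∪ {∞}` is `1`-rotational if it is closed under the
right multiplication action of `G`. -/
def IsRotational {G : Type*} [Group G] (𝓕 : Set (SimpleGraph (Option G))) : Prop :=
  ∀ F ∈ 𝓕, ∀ g : G, shiftG F g ∈ 𝓕

/-! Each factor contains exactly four of the edges at `∞`, so `4 ∣ 2N`; and if `a` is a
neighbour of `∞` in a factor `F`, then `a · Stab(F)` consists of neighbours of `∞` in `F`, so
`|Stab(F)| ≤ 4`. Translating an edge at `∞` onto another shows that the group permutes the
factors transitively, while an involution `t` fixes the factor through the edge `{1, t}`;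
hence every involution has a conjugate in every stabilizer. If `4 ∣ N`, let `F` be fixed by the
central involution `r^{N/2}`. Reflections with indices of different parity are not conjugate, so
`Stab(F)` also contains reflections `sr a`, `sr b` with `b - a` odd, and then
`1, r^{N/2}, r^{b-a}, sr a, sr b` are five distinct elements of it. -/
section Rotation

variable {G : Type*} [Group G]

lemma shiftG_adj_map (F : SimpleGraph (Option G)) (g : G) (a b : Option G) :
    (shiftG F g).Adj (a.map (· * g)) (b.map (· * g)) ↔ F.Adj a b := by
  have h : ∀ c : Option G,
      (Equiv.optionCongr (Equiv.mulRight g)).toEmbedding c = c.map (· * g) := by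
    rintro (_ | c) <;> rfl
  rw [shiftG, ← h, ← h, SimpleGraph.map_adj_apply]

lemma shiftG_adj_none_some {F : SimpleGraph (Option G)} {a : G} (h : F.Adj none (some a))
    (g : G) : (shiftG F g).Adj none (some (a * g)) :=
  (shiftG_adj_map F g none (some a)).2 h

lemma shiftG_adj_some_some {F : SimpleGraph (Option G)} {a b : G}
    (h : F.Adj (some a) (some b)) (g : G) : (shiftG F g).Adj (some (a * g)) (some (b * g)) :=
  (shiftG_adj_map F g (some a) (some b)).2 h

lemma shiftG_shiftG (F : SimpleGraph (Option G)) (g h : G) :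
    shiftG (shiftG F g) h = shiftG F (g * h) := by
  rw [shiftG, shiftG, shiftG, SimpleGraph.map_map]
  congr 1
  ext (_ | c) <;> simp [mul_assoc]

lemma shiftG_one (F : SimpleGraph (Option G)) : shiftG F 1 = F := by
  ext a b
  simpa using shiftG_adj_map F 1 a b

def stabSubgroup (F : SimpleGraph (Option G)) : Subgroup G where
  carrier := stabG F
  mul_mem' {g h} hg hh := by
    change shiftG F (g * h) = F
    rw [← shiftG_shiftG, hg, hh]
  one_mem' := shiftG_one F
  inv_mem' {g} hg := by
    change shiftG F g⁻¹ = F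
    conv_lhs => rw [← hg]
    rw [shiftG_shiftG, mul_inv_cancel, shiftG_one]

lemma mem_stabSubgroup {F : SimpleGraph (Option G)} {g : G} :
    g ∈ stabSubgroup F ↔ shiftG F g = F :=
  Iff.rfl

end Rotation

namespace IsKFactorization

variable {G : Type*} [Group G] {k : ℕ} {𝓕 : Set (SimpleGraph (Option G))}

lemma ncard_adj_none (hfac : IsKFactorization k 𝓕) {F : SimpleGraph (Option G)} (hF : F ∈ 𝓕) :
    {x : G | F.Adj none (some x)}.ncard = k := by
  have h : F.neighborSet none = some '' {x : G | F.Adj none (some x)} := by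
    ext (_ | x)
    · simp
    · simp [SimpleGraph.mem_neighborSet]
  rw [← hfac.1 F hF none, h, Set.ncard_image_of_injective _ (Option.some_injective _)]

lemma exists_adj_none (hfac : IsKFactorization k 𝓕) (hk : k ≠ 0)
    {F : SimpleGraph (Option G)} (hF : F ∈ 𝓕) : ∃ a : G, F.Adj none (some a) :=
  Set.nonempty_of_ncard_ne_zero ((hfac.ncard_adj_none hF).symm ▸ hk)

lemma dvd_card [Fintype G] (hfac : IsKFactorization k 𝓕) : k ∣ Fintype.card G := by
  classical
  choose φ hφ using fun x : G => hfac.2 none (some x) (by simp)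
  have hfiber : ∀ F ∈ Finset.univ.image φ, k = (Finset.univ.filter (φ · = F)).card := by
    intro F hF
    obtain ⟨x₀, -, rfl⟩ := Finset.mem_image.1 hF
    rw [← hfac.ncard_adj_none (hφ x₀).1.1, ← Set.ncard_coe_finset]
    congr 1
    ext y
    simp only [Finset.coe_filter, Finset.mem_univ, true_and, Set.mem_ofPred_eq]
    exact ⟨fun h => ((hφ y).2 _ ⟨(hφ x₀).1.1, h⟩).symm, fun h => h ▸ (hφ y).1.2⟩
  rw [← Finset.card_univ, Finset.card_eq_sum_card_image φ]
  exact Finset.dvd_sum fun F hF => (hfiber F hF).dvd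

lemma card_stabSubgroup_le [Finite G] (hfac : IsKFactorization k 𝓕) (hk : k ≠ 0)
    {F : SimpleGraph (Option G)} (hF : F ∈ 𝓕) : Nat.card (stabSubgroup F) ≤ k := by
  obtain ⟨a, ha⟩ := hfac.exists_adj_none hk hF
  have hsub : (a * ·) '' (stabSubgroup F : Set G) ⊆ {x | F.Adj none (some x)} := by
    rintro _ ⟨g, hg, rfl⟩
    simpa [mem_stabSubgroup.1 hg] using shiftG_adj_none_some ha g
  rw [← SetLike.coe_sort_coe, Nat.card_coe_set_eq, ← hfac.ncard_adj_none hF,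
    ← Set.ncard_image_of_injective _ (mul_right_injective a)]
  exact Set.ncard_le_ncard hsub (Set.toFinite _)

lemma exists_shiftG_eq (hfac : IsKFactorization k 𝓕) (hrot : IsRotational 𝓕) (hk : k ≠ 0)
    {F F' : SimpleGraph (Option G)} (hF : F ∈ 𝓕) (hF' : F' ∈ 𝓕) : ∃ g : G, shiftG F g = F' := by
  obtain ⟨a, ha⟩ := hfac.exists_adj_none hk hF
  obtain ⟨b, hb⟩ := hfac.exists_adj_none hk hF'
  refine ⟨a⁻¹ * b, (hfac.2 none (some b) (by simp)).unique ⟨hrot F hF _, ?_⟩ ⟨hF', hb⟩⟩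
  simpa using shiftG_adj_none_some ha (a⁻¹ * b)

lemma exists_mem_stabSubgroup (hfac : IsKFactorization k 𝓕) (hrot : IsRotational 𝓕) {t : G}
    (ht : t * t = 1) (ht1 : t ≠ 1) : ∃ F ∈ 𝓕, t ∈ stabSubgroup F := by
  have h1t : (some 1 : Option G) ≠ some t := by simpa using ht1.symm
  obtain ⟨F, ⟨hF, hadj⟩, hunique⟩ := hfac.2 (some 1) (some t) h1t
  refine ⟨F, hF, hunique _ ⟨hrot F hF t, ?_⟩⟩
  simpa [ht] using (shiftG_adj_some_some hadj t).symm

lemma exists_conj_mem_stabSubgroup (hfac : IsKFactorization k 𝓕) (hrot : IsRotational 𝓕)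
    (hk : k ≠ 0) {t : G} (ht : t * t = 1) (ht1 : t ≠ 1)
    {F₀ : SimpleGraph (Option G)} (hF₀ : F₀ ∈ 𝓕) : ∃ g : G, g⁻¹ * t * g ∈ stabSubgroup F₀ := by
  obtain ⟨F, hF, htF⟩ := hfac.exists_mem_stabSubgroup hrot ht ht1
  obtain ⟨g, rfl⟩ := hfac.exists_shiftG_eq hrot hk hF hF₀
  refine ⟨g, ?_⟩
  rw [mem_stabSubgroup, shiftG_shiftG, ← mul_assoc, ← mul_assoc, mul_inv_cancel, one_mul,
    ← shiftG_shiftG, mem_stabSubgroup.1 htF]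

end IsKFactorization

namespace DihedralGroup

variable {N : ℕ}

lemma exists_conj_sr_eq (h2 : 2 ∣ N) (g : DihedralGroup N) (j : ZMod N) :
    ∃ m, g⁻¹ * sr j * g = sr m ∧
      ZMod.castHom h2 (ZMod 2) m = ZMod.castHom h2 (ZMod 2) j := by
  have two_eq_zero : (2 : ZMod 2) = 0 := rfl
  cases g with
  | r i =>
    refine ⟨j + 2 * i, ?_, by rw [map_add, map_mul, map_ofNat, two_eq_zero, zero_mul, add_zero]⟩
    rw [inv_r, r_mul_sr, sr_mul_r]
    ring_nf
  | sr i =>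
    refine ⟨2 * i - j, ?_, by
      rw [map_sub, map_mul, map_ofNat, two_eq_zero, zero_mul, zero_sub, ZMod.neg_eq_self_mod_two]⟩
    rw [inv_sr, sr_mul_sr, r_mul_sr]
    ring_nf

lemma sr_ne_one (j : ZMod N) : sr j ≠ 1 := by
  rw [one_def]
  nofun

lemma four_lt_card_of_mem [NeZero N] (h2 : 2 ∣ N) {S : Subgroup (DihedralGroup N)}
    {c a b : ZMod N} (hc0 : c ≠ 0) (hc : ZMod.castHom h2 (ZMod 2) c = 0)
    (hab : ZMod.castHom h2 (ZMod 2) a ≠ ZMod.castHom h2 (ZMod 2) b)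
    (hcS : r c ∈ S) (haS : sr a ∈ S) (hbS : sr b ∈ S) : 4 < Nat.card S := by
  classical
  have hd : ZMod.castHom h2 (ZMod 2) (b - a) ≠ 0 := by
    rwa [map_sub, sub_ne_zero, ne_comm]
  have hd0 : b - a ≠ 0 := fun h => hd (by rw [h, map_zero])
  have hdc : c ≠ b - a := fun h => hd (h ▸ hc)
  have hne : a ≠ b := fun h => hab (h ▸ rfl)
  have hsub : (({r 0, r c, r (b - a), sr a, sr b} : Finset (DihedralGroup N)) : Set _) ⊆
      (S : Set (DihedralGroup N)) := by
    have hdS : r (b - a) ∈ S := sr_mul_sr a b ▸ S.mul_mem haS hbS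
    simp [Set.insert_subset_iff, r_zero, S.one_mem, hcS, hdS, haS, hbS]
  have hcard : ({r 0, r c, r (b - a), sr a, sr b} : Finset (DihedralGroup N)).card = 5 := by
    simp [-r_zero, hc0.symm, hd0.symm, hdc, hne]
  have h5 := Set.ncard_le_ncard hsub (Set.toFinite _)
  rw [Set.ncard_coe_finset, hcard] at h5
  rw [← SetLike.coe_sort_coe, Nat.card_coe_set_eq]
  omega

end DihedralGroup

open DihedralGroup in
theorem stmt6 (N : ℕ) (hN : 0 < N)
    (𝓕 : Set (SimpleGraph (Option (DihedralGroup N))))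
    (hfac : IsKFactorization 4 𝓕) (hrot : IsRotational 𝓕) :
    N % 4 = 2 := by
  have : NeZero N := ⟨hN.ne'⟩
  have h4 : 4 ∣ 2 * N := card (n := N) ▸ hfac.dvd_card
  have h2 : 2 ∣ N := by omega
  refine (by omega : N % 4 = 0 ∨ N % 4 = 2).resolve_left fun h0 => ?_
  set π := ZMod.castHom h2 (ZMod 2)
  set c : ZMod N := ((N / 2 : ℕ) : ZMod N)
  have hcc : c + c = 0 := by
    rw [← Nat.cast_add, show N / 2 + N / 2 = N by omega, ZMod.natCast_self]
  have hc0 : c ≠ 0 := by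
    rw [Ne, ZMod.natCast_eq_zero_iff]
    exact fun h => absurd (Nat.le_of_dvd (by omega) h) (by omega)
  have hc_even : π c = 0 := by
    rw [map_natCast, ZMod.natCast_eq_zero_iff]
    omega
  obtain ⟨F₀, hF₀, hcS⟩ := hfac.exists_mem_stabSubgroup hrot (t := r c)
    (by rw [r_mul_r, hcc, r_zero]) (by rwa [one_def, Ne, r.injEq])
  have hsr : ∀ j, ∃ m, sr m ∈ stabSubgroup F₀ ∧ π m = π j := fun j => by
    obtain ⟨g, hg⟩ :=
      hfac.exists_conj_mem_stabSubgroup hrot four_ne_zero (sr_mul_self j) (sr_ne_one j) hF₀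
    obtain ⟨m, hm, hpar⟩ := exists_conj_sr_eq h2 g j
    exact ⟨m, hm ▸ hg, hpar⟩
  obtain ⟨a, haS, ha⟩ := hsr 0
  obtain ⟨b, hbS, hb⟩ := hsr 1
  have h5 := four_lt_card_of_mem h2 hc0 hc_even (by rw [ha, hb, map_zero, map_one]; decide)
    hcS haS hbS
  have := hfac.card_stabSubgroup_le four_ne_zero hF₀
  omega
end

section
/- If a finite group G admits a 1-rotational 2-factorization of the complete graph on G ∪ {∞}, then for every n ≥ 1 the group G × ℤ_n admits a 1-rotational 2n-factorization of the complete graph on (G × ℤ_n) ∪ {∞}. -/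
open SimpleGraph

/-- The difference list of a graph on `G ∪ {∞}` covers every nonidentity element of `G`. -/
def DiffCovers {G : Type*} [Group G] (F : SimpleGraph (Option G)) : Prop :=
  ∀ d : G, d ≠ 1 → ∃ a b : G, F.Adj (some a) (some b) ∧ a * b⁻¹ = d

/-- A `k`-starter under `G`: a `k`-factor whose `G`-stabilizer has order `k` and whose
difference list covers `G ∖ {1}`. -/
def IsStarter {G : Type*} [Group G] (k : ℕ) (F : SimpleGraph (Option G)) : Prop :=
  IsKFactor k F ∧ (stabG F).ncard = k ∧ DiffCovers F

/-- The graph `H` on `(G × ℤ_n) ∪ {∞}` constructed from a `2`-factor `F` of the complete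
graph on `G ∪ {∞}`: join `∞` to `(x,k)` for `x ~ ∞` in `F`; join `(x,k)` to `(x,r)` for
`x ~ ∞` in `F` and `k ≠ r`; join `(x,k)` to `(y,r)` for every edge `[x,y]` of `F`
avoiding `∞`. -/
def Hgraph {G : Type*} [Group G] (F : SimpleGraph (Option G)) (n : ℕ) :
    SimpleGraph (Option (G × Multiplicative (ZMod n))) :=
  SimpleGraph.fromRel (fun u v =>
    (∃ (x : G) (k : Multiplicative (ZMod n)),
        F.Adj none (some x) ∧ u = none ∧ v = some (x, k)) ∨
    (∃ (x : G) (k r : Multiplicative (ZMod n)),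
        F.Adj none (some x) ∧ k ≠ r ∧ u = some (x, k) ∧ v = some (x, r)) ∨
    (∃ (x y : G) (k r : Multiplicative (ZMod n)),
        F.Adj (some x) (some y) ∧ u = some (x, k) ∧ v = some (y, r)))

/-!
Take `𝓖 = {Hgraph F n | F ∈ 𝓕}`. The neighbourhood of a vertex `v` of `Hgraph F n` is in
bijection with `N_F(v̄) × ℤ_n`, where `v̄` forgets the `ℤ_n`-coordinate, so `2`-factors become
`2n`-factors. Each edge of the complete graph on `(G × ℤ_n) ∪ {∞}` lies, uniformly in `F`, over a
single edge of the complete graph on `G ∪ {∞}` (the edge `[(x, k), (x, r)]` over `[∞, x]`), so the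
edge partition lifts. Finally `Hgraph F n` translated by `(g, t)` is `Hgraph (shiftG F g) n`.
-/

open Set

lemma IsKFactorization.image {V W : Type*} {k m : ℕ} {𝓕 : Set (SimpleGraph V)}
    (h𝓕 : IsKFactorization k 𝓕) (Φ : SimpleGraph V → SimpleGraph W)
    (hΦ : ∀ F, IsKFactor k F → IsKFactor m (Φ F))
    (hadj : ∀ u v : W, u ≠ v → ∃ a b : V, a ≠ b ∧ ∀ F, (Φ F).Adj u v ↔ F.Adj a b) :
    IsKFactorization m (Φ '' 𝓕) := by
  refine ⟨?_, fun u v huv => ?_⟩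
  · rintro _ ⟨F, hF, rfl⟩
    exact hΦ F (h𝓕.1 F hF)
  obtain ⟨a, b, hab, hΦab⟩ := hadj u v huv
  obtain ⟨F, ⟨hF, hFab⟩, huniq⟩ := h𝓕.2 a b hab
  refine ⟨Φ F, ⟨mem_image_of_mem Φ hF, (hΦab F).2 hFab⟩, ?_⟩
  rintro _ ⟨⟨F', hF', rfl⟩, hF'uv⟩
  rw [huniq F' ⟨hF', (hΦab F').1 hF'uv⟩]

lemma shiftG_adj {G : Type*} [Group G] (F : SimpleGraph (Option G)) (g : G) (u v : Option G) :
    (shiftG F g).Adj u v ↔ F.Adj (u.map (· * g⁻¹)) (v.map (· * g⁻¹)) := by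
  constructor
  · rintro ⟨-, a, b, h, rfl, rfl⟩
    simpa [Option.map_map, Function.comp_def] using h
  · intro h
    exact ⟨fun e => h.ne (by rw [e]), u.map (· * g⁻¹), v.map (· * g⁻¹), h,
      by cases u <;> simp, by cases v <;> simp⟩

namespace Hgraph

variable {G : Type*} {n : ℕ}

/-- The bijection `N_F(x) × ℤ_n → N_H((x, k))`: the neighbour `∞` of `x` on layer `r` goes to `∞`
if `r = k` and to `(x, r)` otherwise. -/
def liftAt (x : G) (k : Multiplicative (ZMod n)) :
    Option G × Multiplicative (ZMod n) → Option (G × Multiplicative (ZMod n))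
  | (some y, r) => some (y, r)
  | (none, r) => if r = k then none else some (x, r)

lemma injOn_liftAt (F : SimpleGraph (Option G)) (x : G) (k : Multiplicative (ZMod n)) :
    InjOn (liftAt x k) (F.neighborSet (some x) ×ˢ univ) := by
  rintro ⟨_ | y, r⟩ ⟨h, -⟩ ⟨_ | y', r'⟩ ⟨h', -⟩ he <;> simp only [liftAt] at he
  · split_ifs at he <;> simp_all
  · split_ifs at he; simp_all
  · split_ifs at he; simp_all
  · simp_all

variable [Group G] (F : SimpleGraph (Option G))

@[simp]
lemma adj_none_some (x : G) (k : Multiplicative (ZMod n)) :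
    (Hgraph F n).Adj none (some (x, k)) ↔ F.Adj none (some x) := by
  simp only [Hgraph, fromRel_adj]
  aesop

@[simp]
lemma adj_some_none (x : G) (k : Multiplicative (ZMod n)) :
    (Hgraph F n).Adj (some (x, k)) none ↔ F.Adj none (some x) := by
  rw [adj_comm, adj_none_some]

@[simp]
lemma adj_some_some (x y : G) (k r : Multiplicative (ZMod n)) :
    (Hgraph F n).Adj (some (x, k)) (some (y, r)) ↔
      (x = y ∧ k ≠ r ∧ F.Adj none (some x)) ∨ F.Adj (some x) (some y) := by
  simp only [Hgraph, fromRel_adj]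
  constructor
  · rintro ⟨-, h | h⟩ <;> aesop (add safe apply SimpleGraph.Adj.symm)
  · rintro (⟨rfl, hkr, h⟩ | h)
    · exact ⟨by simp [hkr], .inl (.inr (.inl ⟨x, k, r, h, hkr, rfl, rfl⟩))⟩
    · exact ⟨by rintro ⟨⟩; exact F.irrefl h, .inl (.inr (.inr ⟨x, y, k, r, h, rfl, rfl⟩))⟩

lemma exists_adj_iff_adj {u v : Option (G × Multiplicative (ZMod n))} (huv : u ≠ v) :
    ∃ a b : Option G, a ≠ b ∧ ∀ F : SimpleGraph (Option G), (Hgraph F n).Adj u v ↔ F.Adj a b := by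
  rcases u with _ | ⟨x, k⟩ <;> rcases v with _ | ⟨y, r⟩
  · exact absurd rfl huv
  · exact ⟨none, some y, by simp, by simp⟩
  · exact ⟨some x, none, by simp, fun F => by simp [adj_comm]⟩
  by_cases hxy : x = y
  · subst hxy
    have hkr : k ≠ r := by simpa using huv
    exact ⟨none, some x, by simp, by simp [hkr]⟩
  · exact ⟨some x, some y, by simpa using hxy, by simp [hxy]⟩

lemma neighborSet_none :
    (Hgraph F n).neighborSet none = some '' ({x | F.Adj none (some x)} ×ˢ univ) := by
  ext (_ | ⟨x, k⟩) <;> simp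

lemma neighborSet_some (x : G) (k : Multiplicative (ZMod n)) :
    (Hgraph F n).neighborSet (some (x, k)) = liftAt x k '' (F.neighborSet (some x) ×ˢ univ) := by
  ext w
  simp only [mem_neighborSet, mem_image, mem_prod, mem_univ, and_true, Prod.exists,
    Option.exists, liftAt]
  rcases w with _ | ⟨y, r⟩
  · simp [adj_comm]
  · simp only [adj_some_some, adj_comm F (some x) none, ne_comm (a := k)]
    aesop

lemma ncard_neighborSet (v : Option (G × Multiplicative (ZMod n))) :
    ((Hgraph F n).neighborSet v).ncard = (F.neighborSet (v.map Prod.fst)).ncard * n := by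
  rcases v with _ | ⟨x, k⟩
  · have hF : F.neighborSet none = some '' {x | F.Adj none (some x)} := by
      ext (_ | x) <;> simp
    rw [neighborSet_none, Option.map_none, hF,
      ncard_image_of_injective _ (Option.some_injective _),
      ncard_image_of_injective _ (Option.some_injective _), ncard_prod, ncard_univ]
    exact congrArg _ (Nat.card_zmod n)
  · rw [neighborSet_some, (injOn_liftAt F x k).ncard_image, ncard_prod, ncard_univ]
    exact congrArg _ (Nat.card_zmod n)

lemma isKFactor {k : ℕ} (hF : IsKFactor k F) : IsKFactor (k * n) (Hgraph F n) := fun v => by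
  rw [ncard_neighborSet, hF]

lemma shiftG_eq (g : G) (t : Multiplicative (ZMod n)) :
    shiftG (Hgraph F n) (g, t) = Hgraph (shiftG F g) n := by
  ext u v
  rw [shiftG_adj]
  rcases u with _ | ⟨x, k⟩ <;> rcases v with _ | ⟨y, r⟩ <;> simp [shiftG_adj]

end Hgraph

theorem stmt13_general {G : Type*} [Group G]
    (𝓕 : Set (SimpleGraph (Option G)))
    (hfac : IsKFactorization 2 𝓕) (hrot : IsRotational 𝓕) (n : ℕ) :
    ∃ 𝓖 : Set (SimpleGraph (Option (G × Multiplicative (ZMod n)))),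
      IsKFactorization (2 * n) 𝓖 ∧ IsRotational 𝓖 := by
  refine ⟨(Hgraph · n) '' 𝓕, hfac.image _ (fun F => Hgraph.isKFactor F)
    fun u v => Hgraph.exists_adj_iff_adj, ?_⟩
  rintro _ ⟨F, hF, rfl⟩ ⟨g, t⟩
  rw [Hgraph.shiftG_eq]
  exact mem_image_of_mem _ (hrot F hF g)

theorem stmt13 {G : Type*} [Group G] [Fintype G]
    (𝓕 : Set (SimpleGraph (Option G)))
    (hfac : IsKFactorization 2 𝓕) (hrot : IsRotational 𝓕) (n : ℕ) (hn : 1 ≤ n) :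
    ∃ 𝓖 : Set (SimpleGraph (Option (G × Multiplicative (ZMod n)))),
      IsKFactorization (2 * n) 𝓖 ∧ IsRotational 𝓖 :=
  stmt13_general 𝓕 hfac hrot n
end
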